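/- Let (Ω, μ) be a finite probability space, Y : Ω → [0,1], f : Ω → [0,1] with finite range of cardinality m, and B, γ > 0 with m ≥ 2B/α where α = γ·B (equivalently α/B = γ and 1/m ≤ γ/2). Suppose for each v in the range of f with Pr[f = v] ≥ p there exists g_v : Ω → ℝ with E[(f - Y)² - (g_v - Y)² | f = v] ≥ γ, and for the remaining level sets take g_v with E[(f-Y)² - (g_v - Y)² | f = v] ≥ 0. Define f̃(ω) = g_v(ω) on each level set {f = v} where such g_v exists and f̃ = f otherwise. If the total mass of level sets with improvement at least γ is at least q, then E[(f - Y)²] - E[(f̃ - Y)²] ≥ q·γ, and after pointwise rounding of f̃ to the grid of multiples of 1/m in [0,1] the improvement is at least q·γ - 1/m. -/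

import Mathlib

/-!
Summing over the level sets of `f` writes the total improvement
`E[(f - Y)²] - E[(g (f ·) - Y)²]` as `∑ᵥ Pr[f = v] · E[(f - Y)² - (g v - Y)² | f = v]`; every
summand is nonnegative and those with `v ∈ V` are at least `γ · Pr[f = v]`.
For the rounding loss, clamping `x` to `[0, 1]` only moves it towards `y ∈ [0, 1]`, and rounding a
point of `[0, 1]` to the grid moves it by at most `1 / (2m)`; since `a² - b² = (a - b)(a + b)` and
all points involved lie in `[0, 1]`, the squared error grows by at most `1 / m`.
-/

open scoped Classical
open Finset

variable {Ω : Type*}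

/-- Probability of an event `S` under weight function `μ` on a finite space. -/
noncomputable def prEv [Fintype Ω] (μ : Ω → ℝ) (S : Set Ω) : ℝ :=
  ∑ ω : Ω, if ω ∈ S then μ ω else 0

/-- Conditional expectation of `g` given the event `S`. -/
noncomputable def cexp [Fintype Ω] (μ : Ω → ℝ) (S : Set Ω) (g : Ω → ℝ) : ℝ :=
  (∑ ω : Ω, if ω ∈ S then μ ω * g ω else 0) / prEv μ S

/-- (Unconditional) expectation of `g`. -/
noncomputable def exv [Fintype Ω] (μ : Ω → ℝ) (g : Ω → ℝ) : ℝ :=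
  ∑ ω : Ω, μ ω * g ω

/-- Rounding to the nearest multiple of 1/m in [0,1]. -/
noncomputable def roundGrid (m : ℕ) (x : ℝ) : ℝ :=
  ((min (m : ℤ) (max 0 (round (x * m)))) : ℝ) / m

theorem round_mono {α : Type*} [Ring α] [LinearOrder α] [IsStrictOrderedRing α] [FloorRing α] :
    Monotone (round : α → ℤ) := fun a b hab => by
  rw [round_eq_div, round_eq_div]
  exact Int.ediv_le_ediv two_pos
    (add_le_add_left (Int.floor_mono (mul_le_mul_of_nonneg_left hab zero_le_two)) 1)

theorem roundGrid_eq_round_clamp {m : ℕ} (x : ℝ) :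
    roundGrid m x = round (max 0 (min x 1) * m) / m := by
  have hm : (0 : ℝ) ≤ m := Nat.cast_nonneg m
  have hround : round (max 0 (min x 1) * m) = max 0 (min (round (x * m)) m) := by
    rw [max_mul_of_nonneg _ _ hm, min_mul_of_nonneg _ _ hm, zero_mul, one_mul,
      round_mono.map_max, round_mono.map_min, round_zero, round_natCast]
  rw [roundGrid, hround]
  push_cast
  rw [min_comm, max_min_distrib_left, max_eq_right hm, min_comm]

theorem roundGrid_mem_Icc {m : ℕ} (hm : 0 < m) (x : ℝ) : roundGrid m x ∈ Set.Icc (0 : ℝ) 1 := by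
  have hm' : (0 : ℝ) < m := Nat.cast_pos.2 hm
  have h0 : (0 : ℤ) ≤ min (m : ℤ) (max 0 (round (x * m))) :=
    le_min (by positivity) (le_max_left _ _)
  have h1 : min (m : ℤ) (max 0 (round (x * m))) ≤ m := min_le_left _ _
  constructor
  · exact div_nonneg (by exact_mod_cast h0) hm'.le
  · exact (div_le_one hm').2 (by exact_mod_cast h1)

theorem abs_roundGrid_sub_clamp_le {m : ℕ} (hm : 0 < m) (x : ℝ) :
    |roundGrid m x - max 0 (min x 1)| ≤ 1 / (2 * m) := by
  have hm' : (0 : ℝ) < m := Nat.cast_pos.2 hm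
  set c := max 0 (min x 1)
  have hround : |(round (c * m) : ℝ) - c * m| ≤ 1 / 2 := abs_sub_comm (c * m) _ ▸ abs_sub_round _
  have hrw : roundGrid m x - c = (round (c * m) - c * m) / m := by
    rw [roundGrid_eq_round_clamp, sub_div, mul_div_cancel_right₀ _ hm'.ne']
  rw [hrw, abs_div, abs_of_pos hm', div_le_div_iff₀ hm' (by positivity)]
  nlinarith

theorem sq_clamp_sub_le {x y : ℝ} (hy : y ∈ Set.Icc (0 : ℝ) 1) :
    (max 0 (min x 1) - y) ^ 2 ≤ (x - y) ^ 2 := by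
  obtain ⟨hy0, hy1⟩ := hy
  rcases le_total x 0 with hx0 | hx0
  · rw [min_eq_left (hx0.trans zero_le_one), max_eq_left hx0]
    nlinarith
  rcases le_total x 1 with hx1 | hx1
  · rw [min_eq_left hx1, max_eq_right hx0]
  · rw [min_eq_right hx1, max_eq_right zero_le_one]
    nlinarith

theorem sq_sub_le_sq_sub_add_of_mem_Icc {a b y : ℝ} (ha : a ∈ Set.Icc (0 : ℝ) 1)
    (hb : b ∈ Set.Icc (0 : ℝ) 1) (hy : y ∈ Set.Icc (0 : ℝ) 1) :
    (a - y) ^ 2 ≤ (b - y) ^ 2 + 2 * |a - b| := by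
  obtain ⟨ha0, ha1⟩ := ha
  obtain ⟨hb0, hb1⟩ := hb
  obtain ⟨hy0, hy1⟩ := hy
  have hsum : |a + b - 2 * y| ≤ 2 := abs_le.2 ⟨by linarith, by linarith⟩
  have hprod : (a - b) * (a + b - 2 * y) ≤ |a - b| * 2 :=
    calc (a - b) * (a + b - 2 * y) ≤ |(a - b) * (a + b - 2 * y)| := le_abs_self _
      _ = |a - b| * |a + b - 2 * y| := abs_mul _ _
      _ ≤ |a - b| * 2 := mul_le_mul_of_nonneg_left hsum (abs_nonneg _)
  linarith [show (a - y) ^ 2 = (b - y) ^ 2 + (a - b) * (a + b - 2 * y) by ring]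

theorem sq_roundGrid_sub_le {m : ℕ} (hm : 0 < m) (x : ℝ) {y : ℝ} (hy : y ∈ Set.Icc (0 : ℝ) 1) :
    (roundGrid m x - y) ^ 2 ≤ (x - y) ^ 2 + 1 / m := by
  have hclamp : max 0 (min x 1) ∈ Set.Icc (0 : ℝ) 1 :=
    ⟨le_max_left _ _, max_le zero_le_one (min_le_right _ _)⟩
  calc (roundGrid m x - y) ^ 2
      ≤ (max 0 (min x 1) - y) ^ 2 + 2 * |roundGrid m x - max 0 (min x 1)| :=
        sq_sub_le_sq_sub_add_of_mem_Icc (roundGrid_mem_Icc hm x) hclamp hy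
    _ ≤ (x - y) ^ 2 + 2 * (1 / (2 * m)) :=
        add_le_add (sq_clamp_sub_le hy)
          (mul_le_mul_of_nonneg_left (abs_roundGrid_sub_clamp_le hm x) zero_le_two)
    _ = (x - y) ^ 2 + 1 / m := by field_simp

section LevelSets

variable [Fintype Ω] {μ : Ω → ℝ}

theorem prEv_nonneg (hμ : ∀ ω, 0 ≤ μ ω) (S : Set Ω) : 0 ≤ prEv μ S :=
  sum_nonneg fun ω _ => by split_ifs <;> simp [hμ ω]

/-- Also valid on null events: there `cexp` is the junk value `_ / 0 = 0`, and the numerator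
vanishes too. -/
theorem cexp_mul_prEv (hμ : ∀ ω, 0 ≤ μ ω) (S : Set Ω) (h : Ω → ℝ) :
    cexp μ S h * prEv μ S = ∑ ω : Ω, if ω ∈ S then μ ω * h ω else 0 := by
  by_cases hS : prEv μ S = 0
  · have hμS : ∀ ω ∈ S, μ ω = 0 := fun ω hω => by
      simpa [hω] using (sum_eq_zero_iff_of_nonneg fun ω _ => by
        split_ifs <;> simp [hμ ω]).1 hS ω (mem_univ ω)
    rw [hS, mul_zero]
    exact (sum_eq_zero fun ω _ => by split_ifs with hω <;> simp [hμS ω, *]).symm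
  · exact div_mul_cancel₀ _ hS

theorem cexp_congr {S : Set Ω} {h h' : Ω → ℝ} (hh : ∀ ω ∈ S, h ω = h' ω) :
    cexp μ S h = cexp μ S h' := by
  unfold cexp
  congr 1
  exact sum_congr rfl fun ω _ => by split_ifs with hω <;> simp [hh ω, *]

theorem exv_eq_sum_cexp_mul_prEv {β : Type*} (hμ : ∀ ω, 0 ≤ μ ω) (f : Ω → β) (h : Ω → ℝ) :
    exv μ h = ∑ v ∈ univ.image f, cexp μ {ω | f ω = v} h * prEv μ {ω | f ω = v} := by
  simp only [cexp_mul_prEv hμ, Set.mem_ofPred_eq]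
  rw [sum_comm]
  exact sum_congr rfl fun ω _ => by rw [sum_ite_eq, if_pos (mem_image_of_mem f (mem_univ ω))]

theorem exv_sub (g h : Ω → ℝ) : exv μ (fun ω => g ω - h ω) = exv μ g - exv μ h := by
  simp only [exv, mul_sub, sum_sub_distrib]

theorem exv_mono (hμ : ∀ ω, 0 ≤ μ ω) {g h : Ω → ℝ} (hgh : ∀ ω, g ω ≤ h ω) :
    exv μ g ≤ exv μ h :=
  sum_le_sum fun ω _ => mul_le_mul_of_nonneg_left (hgh ω) (hμ ω)

theorem exv_add_const (hμ1 : ∑ ω : Ω, μ ω = 1) (h : Ω → ℝ) (c : ℝ) :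
    exv μ (fun ω => h ω + c) = exv μ h + c := by
  simp only [exv, mul_add, sum_add_distrib, ← sum_mul, hμ1, one_mul]

end LevelSets

theorem mul_le_sum_mul_of_le_on_subset {ι : Type*} {s V : Finset ι} {c P : ι → ℝ} {q γ : ℝ}
    (hV : V ⊆ s) (hP : ∀ i ∈ s, 0 ≤ P i) (hc : ∀ i ∈ s, 0 ≤ c i) (hcV : ∀ i ∈ V, γ ≤ c i)
    (hγ : 0 ≤ γ) (hq : q ≤ ∑ i ∈ V, P i) :
    q * γ ≤ ∑ i ∈ s, c i * P i :=
  calc q * γ ≤ (∑ i ∈ V, P i) * γ := mul_le_mul_of_nonneg_right hq hγ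
    _ = ∑ i ∈ V, γ * P i := by rw [sum_mul]; exact sum_congr rfl fun i _ => mul_comm _ _
    _ ≤ ∑ i ∈ V, c i * P i :=
      sum_le_sum fun i hi => mul_le_mul_of_nonneg_right (hcV i hi) (hP i (hV hi))
    _ ≤ ∑ i ∈ s, c i * P i :=
      sum_le_sum_of_subset_of_nonneg hV fun i hi _ => mul_nonneg (hc i hi) (hP i hi)

theorem stmt_18_general [Fintype Ω] (μ : Ω → ℝ) (hμ : ∀ ω, 0 ≤ μ ω) (hμ1 : ∑ ω : Ω, μ ω = 1)
    (Y f : Ω → ℝ) (hY : ∀ ω, Y ω ∈ Set.Icc (0 : ℝ) 1)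
    (m : ℕ) (hm : 0 < m) (γ q : ℝ) (hγ : 0 ≤ γ)
    (g : ℝ → Ω → ℝ)
    (hg0 : ∀ v ∈ Finset.image f Finset.univ,
      0 ≤ cexp μ {ω | f ω = v}
        (fun ω => (f ω - Y ω) ^ 2 - (g v ω - Y ω) ^ 2))
    (V : Finset ℝ) (hV : V ⊆ Finset.image f Finset.univ)
    (hVimp : ∀ v ∈ V,
      γ ≤ cexp μ {ω | f ω = v}
        (fun ω => (f ω - Y ω) ^ 2 - (g v ω - Y ω) ^ 2))
    (hVmass : q ≤ ∑ v ∈ V, prEv μ {ω | f ω = v}) :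
    q * γ ≤ exv μ (fun ω => (f ω - Y ω) ^ 2) -
        exv μ (fun ω => (g (f ω) ω - Y ω) ^ 2) ∧
      q * γ - 1 / (m : ℝ) ≤ exv μ (fun ω => (f ω - Y ω) ^ 2) -
        exv μ (fun ω => (roundGrid m (g (f ω) ω) - Y ω) ^ 2) := by
  have hlevel : exv μ (fun ω => (f ω - Y ω) ^ 2) - exv μ (fun ω => (g (f ω) ω - Y ω) ^ 2) =
      ∑ v ∈ univ.image f, cexp μ {ω | f ω = v}
        (fun ω => (f ω - Y ω) ^ 2 - (g v ω - Y ω) ^ 2) * prEv μ {ω | f ω = v} := by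
    rw [← exv_sub, exv_eq_sum_cexp_mul_prEv hμ f]
    refine sum_congr rfl fun v _ => congrArg (· * _) (cexp_congr fun ω hω => ?_)
    rw [show f ω = v from hω]
  have hgain := hlevel ▸ mul_le_sum_mul_of_le_on_subset hV (fun v _ => prEv_nonneg hμ _)
    hg0 hVimp hγ hVmass
  have hround : exv μ (fun ω => (roundGrid m (g (f ω) ω) - Y ω) ^ 2) ≤
      exv μ (fun ω => (g (f ω) ω - Y ω) ^ 2) + 1 / m :=
    (exv_mono hμ fun ω => sq_roundGrid_sub_le hm _ (hY ω)).trans_eq (exv_add_const hμ1 _ _)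
  exact ⟨hgain, by linarith⟩

/-- level-set improvements of size γ on level sets of total mass q
combine to a total squared-error improvement of qγ, losing at most 1/m to rounding. -/
theorem stmt_18 [Fintype Ω] (μ : Ω → ℝ) (hμ : ∀ ω, 0 ≤ μ ω) (hμ1 : ∑ ω : Ω, μ ω = 1)
    (Y f : Ω → ℝ) (hY : ∀ ω, Y ω ∈ Set.Icc (0 : ℝ) 1) (hf : ∀ ω, f ω ∈ Set.Icc (0 : ℝ) 1)
    (m : ℕ) (hm : 0 < m) (γ q : ℝ) (hγ : 0 ≤ γ) (hq : 0 ≤ q)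
    (g : ℝ → Ω → ℝ)
    (hg0 : ∀ v ∈ Finset.image f Finset.univ,
      0 ≤ cexp μ {ω | f ω = v}
        (fun ω => (f ω - Y ω) ^ 2 - (g v ω - Y ω) ^ 2))
    (V : Finset ℝ) (hV : V ⊆ Finset.image f Finset.univ)
    (hVimp : ∀ v ∈ V,
      γ ≤ cexp μ {ω | f ω = v}
        (fun ω => (f ω - Y ω) ^ 2 - (g v ω - Y ω) ^ 2))
    (hVmass : q ≤ ∑ v ∈ V, prEv μ {ω | f ω = v}) :
    q * γ ≤ exv μ (fun ω => (f ω - Y ω) ^ 2) -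
        exv μ (fun ω => (g (f ω) ω - Y ω) ^ 2) ∧
      q * γ - 1 / (m : ℝ) ≤ exv μ (fun ω => (f ω - Y ω) ^ 2) -
        exv μ (fun ω => (roundGrid m (g (f ω) ω) - Y ω) ^ 2) :=
  stmt_18_general μ hμ hμ1 Y f hY m hm γ q hγ g hg0 V hV hVimp hVmass
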